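/- In a 2-agent 2×2 general-sum game with u_r u_c > 0 in which exactly one of the center coordinates α^c = −b_c/u_c and β^c = −b_r/u_r lies in the valid probability range [0,1], if both agents follow GA-SPP with γ₀ and η satisfying Conditions 1–3, then from any initial strategy pair the sequence (α_k,β_k) converges to a Nash equilibrium. -/
import Mathlib


/- Framework for 2-agent 2×2 general-sum games with scalar strategies
   α, β ∈ [0,1] (the probability of the first action). -/

open Filter Topology

noncomputable section

/-- Projection of a real number onto [0, 1] (clamping). -/
def clamp (x : ℝ) : ℝ := max 0 (min 1 x)

/-- Row player's expected payoff. -/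
def Vr2 (R : Matrix (Fin 2) (Fin 2) ℝ) (α β : ℝ) : ℝ :=
  R 0 0 * (α * β) + R 0 1 * (α * (1 - β)) +
  R 1 0 * ((1 - α) * β) + R 1 1 * ((1 - α) * (1 - β))

/-- Column player's expected payoff. -/
def Vc2 (C : Matrix (Fin 2) (Fin 2) ℝ) (α β : ℝ) : ℝ :=
  C 0 0 * (α * β) + C 0 1 * (α * (1 - β)) +
  C 1 0 * ((1 - α) * β) + C 1 1 * ((1 - α) * (1 - β))

def ur2 (R : Matrix (Fin 2) (Fin 2) ℝ) : ℝ := R 0 0 + R 1 1 - R 0 1 - R 1 0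
def br2 (R : Matrix (Fin 2) (Fin 2) ℝ) : ℝ := R 0 1 - R 1 1
def uc2 (C : Matrix (Fin 2) (Fin 2) ℝ) : ℝ := C 0 0 + C 1 1 - C 0 1 - C 1 0
def bc2 (C : Matrix (Fin 2) (Fin 2) ℝ) : ℝ := C 1 0 - C 1 1

/-- ∂_α V_r(α, β) = u_r β + b_r. -/
def dVr2 (R : Matrix (Fin 2) (Fin 2) ℝ) (β : ℝ) : ℝ := ur2 R * β + br2 R

/-- ∂_β V_c(α, β) = u_c α + b_c. -/
def dVc2 (C : Matrix (Fin 2) (Fin 2) ℝ) (α : ℝ) : ℝ := uc2 C * α + bc2 C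

/-- (α, β) is a Nash equilibrium of the 2×2 game. -/
def IsNash2 (R C : Matrix (Fin 2) (Fin 2) ℝ) (α β : ℝ) : Prop :=
  α ∈ Set.Icc (0 : ℝ) 1 ∧ β ∈ Set.Icc (0 : ℝ) 1 ∧
  (∀ α' ∈ Set.Icc (0 : ℝ) 1, Vr2 R α' β ≤ Vr2 R α β) ∧
  (∀ β' ∈ Set.Icc (0 : ℝ) 1, Vc2 C α β' ≤ Vc2 C α β)

/-- δ = max entry − min entry of a 2×2 payoff matrix. -/
def spread2 (M : Matrix (Fin 2) (Fin 2) ℝ) : ℝ :=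
  (Finset.univ.sup' Finset.univ_nonempty fun p : Fin 2 × Fin 2 => M p.1 p.2)
  - (Finset.univ.inf' Finset.univ_nonempty fun p : Fin 2 × Fin 2 => M p.1 p.2)

/-- Conditions 1–3 on the initial prediction length γ₀ and the step size η. -/
def Conds2 (R C : Matrix (Fin 2) (Fin 2) ℝ) (γ₀ η : ℝ) : Prop :=
  0 < γ₀ ∧ 0 < η ∧
  4 * γ₀ ^ 2 * spread2 R * spread2 C < 1 ∧
  η < 1 / (spread2 R + spread2 C) ∧ γ₀ < 1 / (spread2 R + spread2 C)

/-- Both agents follow GA-SPP in the 2×2 game: `a`,`b` are the strategies,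
`abar`,`bbar` the predictions, `γ` the prediction lengths, `η` the step size. -/
def GASPP2Run (R C : Matrix (Fin 2) (Fin 2) ℝ) (η : ℝ)
    (γ a b abar bbar : ℕ → ℝ) : Prop :=
  ∀ k : ℕ,
    abar (k + 1) = clamp (a k + γ k * dVr2 R (b k)) ∧
    bbar (k + 1) = clamp (b k + γ k * dVc2 C (a k)) ∧
    ((abar (k + 1) = a k ∧ bbar (k + 1) = b k) →
        a (k + 1) = a k ∧ b (k + 1) = b k ∧ γ (k + 1) = γ k) ∧
    (¬(abar (k + 1) = a k ∧ bbar (k + 1) = b k) →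
        a (k + 1) = clamp (a k + η * dVr2 R (bbar (k + 1))) ∧
        b (k + 1) = clamp (b k + η * dVc2 C (abar (k + 1))) ∧
        ((a (k + 1) = a k ∧ b (k + 1) = b k) →
            ∃ μ : ℝ, 0 < μ ∧ μ < 1 ∧ γ (k + 1) = μ * γ k) ∧
        (¬(a (k + 1) = a k ∧ b (k + 1) = b k) → γ (k + 1) = γ k))

/-- The row agent follows GA-SPP while the column agent follows basic
gradient ascent (GA), based on the opponent's current strategy. -/
def GASPP2vsGARun (R C : Matrix (Fin 2) (Fin 2) ℝ) (η : ℝ)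
    (γ a b abar bbar : ℕ → ℝ) : Prop :=
  ∀ k : ℕ,
    abar (k + 1) = clamp (a k + γ k * dVr2 R (b k)) ∧
    bbar (k + 1) = clamp (b k + γ k * dVc2 C (a k)) ∧
    ((abar (k + 1) = a k ∧ bbar (k + 1) = b k) →
        a (k + 1) = a k ∧ b (k + 1) = b k ∧ γ (k + 1) = γ k) ∧
    (¬(abar (k + 1) = a k ∧ bbar (k + 1) = b k) →
        a (k + 1) = clamp (a k + η * dVr2 R (bbar (k + 1))) ∧
        b (k + 1) = clamp (b k + η * dVc2 C (a k)) ∧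
        ((a (k + 1) = a k ∧ b (k + 1) = b k) →
            ∃ μ : ℝ, 0 < μ ∧ μ < 1 ∧ γ (k + 1) = μ * γ k) ∧
        (¬(a (k + 1) = a k ∧ b (k + 1) = b k) → γ (k + 1) = γ k))

end



lemma clamp_mem (x : ℝ) : clamp x ∈ Set.Icc (0:ℝ) 1 :=
  ⟨le_max_left _ _, max_le (by norm_num) (min_le_left _ _)⟩

lemma clamp_le_one (x : ℝ) : clamp x ≤ 1 := (clamp_mem x).2

lemma clamp_of_mem {x : ℝ} (h : x ∈ Set.Icc (0:ℝ) 1) : clamp x = x := by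
  unfold clamp; rw [min_eq_right h.2, max_eq_right h.1]

lemma clamp_of_one_le {x : ℝ} (h : 1 ≤ x) : clamp x = 1 := by
  unfold clamp; rw [min_eq_left h]; exact max_eq_right (by norm_num)

lemma clamp_of_nonpos {x : ℝ} (h : x ≤ 0) : clamp x = 0 := by
  unfold clamp; exact max_eq_left (le_trans (min_le_right 1 x) h)

lemma clamp_eq_self_pos {a t : ℝ} (ha : a ∈ Set.Icc (0:ℝ) 1) (ht : 0 < t)
    (h : clamp (a + t) = a) : a = 1 := by
  by_contra hne
  have ha1 : a < 1 := lt_of_le_of_ne ha.2 hne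
  rcases le_or_gt (a + t) 1 with hc | hc
  · have h2 : clamp (a+t) = a + t := clamp_of_mem ⟨by linarith [ha.1], hc⟩
    rw [h2] at h; linarith
  · have h2 : clamp (a+t) = 1 := clamp_of_one_le hc.le
    rw [h2] at h; linarith

lemma clamp_eq_self_neg {a t : ℝ} (ha : a ∈ Set.Icc (0:ℝ) 1) (ht : t < 0)
    (h : clamp (a + t) = a) : a = 0 := by
  by_contra hne
  have ha0 : 0 < a := lt_of_le_of_ne ha.1 (Ne.symm hne)
  rcases le_or_gt 0 (a + t) with hc | hc
  · have h2 : clamp (a+t) = a + t := clamp_of_mem ⟨hc, by linarith [ha.2]⟩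
    rw [h2] at h; linarith
  · have h2 : clamp (a+t) = 0 := clamp_of_nonpos hc.le
    rw [h2] at h; linarith

lemma one_sub_clamp (x : ℝ) : 1 - clamp x = clamp (1 - x) := by
  unfold clamp
  rcases le_total x 0 with h | h
  · rw [min_eq_right (by linarith : x ≤ (1:ℝ)), max_eq_left h,
      min_eq_left (by linarith : (1:ℝ) ≤ 1 - x), max_eq_right (by norm_num : (0:ℝ) ≤ 1)]
    norm_num
  · rcases le_total 1 x with h1 | h1
    · rw [min_eq_left h1, max_eq_right (by norm_num : (0:ℝ) ≤ 1),
        min_eq_right (by linarith : 1 - x ≤ (1:ℝ)), max_eq_left (by linarith : 1 - x ≤ (0:ℝ))]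
      norm_num
    · rw [min_eq_right h1, max_eq_right h,
        min_eq_right (by linarith : 1 - x ≤ (1:ℝ)), max_eq_right (by linarith : (0:ℝ) ≤ 1 - x)]

lemma reach_top (x t : ℕ → ℝ) (N : ℕ) (m : ℝ) (hm : 0 < m)
    (hx : x N ∈ Set.Icc (0:ℝ) 1)
    (hstep : ∀ k, N ≤ k → x (k+1) = clamp (x k + t k))
    (ht : ∀ k, N ≤ k → m ≤ t k) :
    ∃ K, N ≤ K ∧ x K = 1 := by
  have key : ∀ j : ℕ, min 1 (x N + j * m) ≤ x (N + j) ∧ x (N + j) ≤ 1 := by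
    intro j
    induction j with
    | zero =>
      constructor
      · simp only [Nat.cast_zero, zero_mul, add_zero, Nat.add_zero]; exact min_le_right 1 (x N)
      · simpa using hx.2
    | succ j ih =>
      have hs := hstep (N + j) (Nat.le_add_right _ _)
      have htt := ht (N + j) (Nat.le_add_right _ _)
      constructor
      · have h1 : min 1 (x N + ((j:ℝ)+1) * m) ≤ min 1 (x (N+j) + t (N+j)) := by
          refine le_min (min_le_left _ _) ?_
          rcases le_total 1 (x N + (j:ℝ) * m) with hc | hc
          · have h2 : (1:ℝ) ≤ x (N+j) := by
              have h3 := ih.1; rwa [min_eq_left hc] at h3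
            have h3 : min 1 (x N + ((j:ℝ)+1) * m) ≤ 1 := min_le_left _ _
            linarith
          · have h2 : x N + (j:ℝ) * m ≤ x (N+j) := by
              have h3 := ih.1; rwa [min_eq_right hc] at h3
            have h3 : min 1 (x N + ((j:ℝ)+1) * m) ≤ x N + ((j:ℝ)+1)*m := min_le_right _ _
            linarith
        have h2 : min 1 (x (N+j) + t (N+j)) ≤ x (N + (j+1)) := by
          rw [show N + (j+1) = (N+j) + 1 from rfl, hs]
          exact le_max_right _ _
        push_cast
        exact le_trans h1 h2
      · rw [show N + (j+1) = (N+j) + 1 from rfl, hs]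
        exact clamp_le_one _
  refine ⟨N + ⌈1/m⌉₊, Nat.le_add_right _ _, ?_⟩
  have h1 : (1:ℝ) ≤ (⌈1/m⌉₊ : ℝ) * m := by rw [← div_le_iff₀ hm]; exact Nat.le_ceil _
  have h2 := key ⌈1/m⌉₊
  have h3 : min 1 (x N + (⌈1/m⌉₊:ℝ) * m) = 1 := min_eq_left (by linarith [hx.1])
  have h4 := h2.1
  rw [h3] at h4
  linarith [h2.2]

lemma reach_bot (x t : ℕ → ℝ) (N : ℕ) (m : ℝ) (hm : 0 < m)
    (hx : x N ∈ Set.Icc (0:ℝ) 1)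
    (hstep : ∀ k, N ≤ k → x (k+1) = clamp (x k + t k))
    (ht : ∀ k, N ≤ k → t k ≤ -m) :
    ∃ K, N ≤ K ∧ x K = 0 := by
  obtain ⟨K, hK, h1⟩ := reach_top (fun k => 1 - x k) (fun k => - t k) N m hm
    ⟨by show (0:ℝ) ≤ 1 - x N; linarith [hx.2], by show (1:ℝ) - x N ≤ 1; linarith [hx.1]⟩
    (fun k hk => by
      show (1:ℝ) - x (k+1) = clamp ((1 - x k) + (- t k))
      rw [hstep k hk, one_sub_clamp]
      congr 1; ring)
    (fun k hk => by show m ≤ - t k; linarith [ht k hk])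
  have h2 : (1:ℝ) - x K = 1 := h1
  exact ⟨K, hK, by linarith⟩

lemma Vr2_affine (R : Matrix (Fin 2) (Fin 2) ℝ) (α β : ℝ) :
    Vr2 R α β = dVr2 R β * α + (R 1 0 * β + R 1 1 * (1 - β)) := by
  simp only [Vr2, dVr2, ur2, br2]; ring

lemma Vc2_affine (C : Matrix (Fin 2) (Fin 2) ℝ) (α β : ℝ) :
    Vc2 C α β = dVc2 C α * β + (C 0 1 * α + C 1 1 * (1 - α)) := by
  simp only [Vc2, dVc2, uc2, bc2]; ring

lemma dVr2_flipM (R : Matrix (Fin 2) (Fin 2) ℝ) (x : ℝ) :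
    dVr2 !![R 1 1, R 1 0; R 0 1, R 0 0] x = -dVr2 R (1 - x) := by
  simp [dVr2, ur2, br2]; ring

lemma dVc2_flipM (C : Matrix (Fin 2) (Fin 2) ℝ) (x : ℝ) :
    dVc2 !![C 1 1, C 1 0; C 0 1, C 0 0] x = -dVc2 C (1 - x) := by
  simp [dVc2, uc2, bc2]; ring

lemma Vr2_flipM (R : Matrix (Fin 2) (Fin 2) ℝ) (α β : ℝ) :
    Vr2 !![R 1 1, R 1 0; R 0 1, R 0 0] α β = Vr2 R (1-α) (1-β) := by
  simp [Vr2]; ring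

lemma Vc2_flipM (C : Matrix (Fin 2) (Fin 2) ℝ) (α β : ℝ) :
    Vc2 !![C 1 1, C 1 0; C 0 1, C 0 0] α β = Vc2 C (1-α) (1-β) := by
  simp [Vc2]; ring

lemma dVr2_transM (C : Matrix (Fin 2) (Fin 2) ℝ) (x : ℝ) :
    dVr2 !![C 0 0, C 1 0; C 0 1, C 1 1] x = dVc2 C x := by
  simp only [dVr2, dVc2, ur2, br2, uc2, bc2, Matrix.cons_val', Matrix.cons_val_zero,
    Matrix.cons_val_one, Matrix.head_cons, Matrix.head_fin_const, Matrix.empty_val',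
    Matrix.cons_val_fin_one, Matrix.of_apply]; ring

lemma dVc2_transM (R : Matrix (Fin 2) (Fin 2) ℝ) (x : ℝ) :
    dVc2 !![R 0 0, R 1 0; R 0 1, R 1 1] x = dVr2 R x := by
  simp only [dVr2, dVc2, ur2, br2, uc2, bc2, Matrix.cons_val', Matrix.cons_val_zero,
    Matrix.cons_val_one, Matrix.head_cons, Matrix.head_fin_const, Matrix.empty_val',
    Matrix.cons_val_fin_one, Matrix.of_apply]; ring

lemma Vr2_transM (C : Matrix (Fin 2) (Fin 2) ℝ) (α β : ℝ) :
    Vr2 !![C 0 0, C 1 0; C 0 1, C 1 1] α β = Vc2 C β α := by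
  simp [Vr2, Vc2]; ring

lemma Vc2_transM (R : Matrix (Fin 2) (Fin 2) ℝ) (α β : ℝ) :
    Vc2 !![R 0 0, R 1 0; R 0 1, R 1 1] α β = Vr2 R β α := by
  simp [Vr2, Vc2]; ring


section AuxMain

variable (R C : Matrix (Fin 2) (Fin 2) ℝ) (η : ℝ) (γ a b abar bbar : ℕ → ℝ)

lemma gamma_pos (hrun : GASPP2Run R C η γ a b abar bbar) (hγ0 : 0 < γ 0) :
    ∀ k, 0 < γ k := by
  intro k
  induction k with
  | zero => exact hγ0
  | succ k ih =>
    obtain ⟨h1, h2, h3, h4⟩ := hrun k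
    by_cases hterm : abar (k+1) = a k ∧ bbar (k+1) = b k
    · rw [(h3 hterm).2.2]; exact ih
    · obtain ⟨_, _, h5, h6⟩ := h4 hterm
      by_cases hfix : a (k+1) = a k ∧ b (k+1) = b k
      · obtain ⟨μ, hμ0, _, hγ⟩ := h5 hfix
        rw [hγ]; exact mul_pos hμ0 ih
      · rw [h6 hfix]; exact ih

lemma mem_invariant (hrun : GASPP2Run R C η γ a b abar bbar)
    (ha0 : a 0 ∈ Set.Icc (0:ℝ) 1) (hb0 : b 0 ∈ Set.Icc (0:ℝ) 1) :
    ∀ k, a k ∈ Set.Icc (0:ℝ) 1 ∧ b k ∈ Set.Icc (0:ℝ) 1 := by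
  intro k
  induction k with
  | zero => exact ⟨ha0, hb0⟩
  | succ k ih =>
    obtain ⟨h1, h2, h3, h4⟩ := hrun k
    by_cases hterm : abar (k+1) = a k ∧ bbar (k+1) = b k
    · obtain ⟨r1, r2, _⟩ := h3 hterm
      rw [r1, r2]; exact ih
    · obtain ⟨r1, r2, _, _⟩ := h4 hterm
      rw [r1, r2]; exact ⟨clamp_mem _, clamp_mem _⟩

lemma core (hη : 0 < η) (hγ0 : 0 < γ 0)
    (ha0 : a 0 ∈ Set.Icc (0:ℝ) 1) (hb0 : b 0 ∈ Set.Icc (0:ℝ) 1)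
    (hrun : GASPP2Run R C η γ a b abar bbar)
    (hpos : ∀ β ∈ Set.Icc (0:ℝ) 1, 0 < dVr2 R β) :
    ∃ αs βs : ℝ, IsNash2 R C αs βs ∧
      Filter.Tendsto (fun k => (a k, b k)) Filter.atTop (nhds (αs, βs)) := by
  have hγ := gamma_pos R C η γ a b abar bbar hrun hγ0
  have hmem := mem_invariant R C η γ a b abar bbar hrun ha0 hb0
  have hm : 0 < min (dVr2 R 0) (dVr2 R 1) :=
    lt_min (hpos 0 ⟨le_refl _, by norm_num⟩) (hpos 1 ⟨by norm_num, le_refl _⟩)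
  set m := min (dVr2 R 0) (dVr2 R 1) with hm_def
  have hmle : ∀ β ∈ Set.Icc (0:ℝ) 1, m ≤ dVr2 R β := by
    intro β hβ
    have h0 : m ≤ dVr2 R 0 := min_le_left _ _
    have h1 : m ≤ dVr2 R 1 := min_le_right _ _
    simp only [dVr2] at h0 h1 ⊢
    nlinarith [mul_nonneg (by linarith [hβ.2] : (0:ℝ) ≤ 1 - β)
        (by linarith : (0:ℝ) ≤ ur2 R * 0 + br2 R - m),
      mul_nonneg hβ.1 (by linarith : (0:ℝ) ≤ ur2 R * 1 + br2 R - m)]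
  by_cases hT : ∃ k, abar (k+1) = a k ∧ bbar (k+1) = b k
  · obtain ⟨k₀, hk₀⟩ := hT
    have hpers : ∀ j, a (k₀+j) = a k₀ ∧ b (k₀+j) = b k₀ ∧ γ (k₀+j) = γ k₀ := by
      intro j
      induction j with
      | zero => exact ⟨rfl, rfl, rfl⟩
      | succ j ih =>
        obtain ⟨h1, h2, h3, _⟩ := hrun (k₀ + j)
        have hterm : abar (k₀+j+1) = a (k₀+j) ∧ bbar (k₀+j+1) = b (k₀+j) := by
          constructor
          · rw [h1, ih.1, ih.2.1, ih.2.2, ← (hrun k₀).1]; exact hk₀.1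
          · rw [h2, ih.1, ih.2.1, ih.2.2, ← (hrun k₀).2.1]; exact hk₀.2
        obtain ⟨r1, r2, r3⟩ := h3 hterm
        exact ⟨by rw [show k₀+(j+1) = k₀+j+1 from rfl, r1]; exact ih.1,
          by rw [show k₀+(j+1) = k₀+j+1 from rfl, r2]; exact ih.2.1,
          by rw [show k₀+(j+1) = k₀+j+1 from rfl, r3]; exact ih.2.2⟩
    have hb₀m := (hmem k₀).2
    have ha1 : a k₀ = 1 := clamp_eq_self_pos (hmem k₀).1
      (mul_pos (hγ k₀) (hpos _ hb₀m)) (by rw [← (hrun k₀).1]; exact hk₀.1)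
    have hbfix : clamp (b k₀ + γ k₀ * dVc2 C 1) = b k₀ := by
      have h2 := (hrun k₀).2.1
      rw [ha1] at h2
      rw [← h2]; exact hk₀.2
    refine ⟨a k₀, b k₀, ⟨(hmem k₀).1, hb₀m, ?_, ?_⟩, ?_⟩
    · intro α' hα'
      rw [Vr2_affine, Vr2_affine, ha1]
      have hd := hpos (b k₀) hb₀m
      nlinarith [hα'.2]
    · intro β' hβ'
      rw [Vc2_affine, Vc2_affine, ha1]
      rcases lt_trichotomy (dVc2 C 1) 0 with hc | hc | hc
      · have hb0' : b k₀ = 0 := clamp_eq_self_neg hb₀m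
          (mul_neg_of_pos_of_neg (hγ k₀) hc) hbfix
        rw [hb0']
        nlinarith [hβ'.1]
      · rw [hc]; simp
      · have hb1 : b k₀ = 1 := clamp_eq_self_pos hb₀m
          (mul_pos (hγ k₀) hc) hbfix
        rw [hb1]
        nlinarith [hβ'.2]
    · apply tendsto_atTop_of_eventually_const (i₀ := k₀)
      intro i hi
      obtain ⟨j, rfl⟩ := Nat.exists_eq_add_of_le hi
      rw [(hpers j).1, (hpers j).2.1]
  · have hT' : ∀ k, ¬(abar (k+1) = a k ∧ bbar (k+1) = b k) := fun k hk => hT ⟨k, hk⟩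
    exfalso
    have hstep2 : ∀ k, a (k+1) = clamp (a k + η * dVr2 R (bbar (k+1))) ∧
        b (k+1) = clamp (b k + η * dVc2 C (abar (k+1))) := by
      intro k
      obtain ⟨_, _, _, h4⟩ := hrun k
      obtain ⟨p1, p2, _, _⟩ := h4 (hT' k)
      exact ⟨p1, p2⟩
    have hbbar_mem : ∀ k, bbar (k+1) ∈ Set.Icc (0:ℝ) 1 := fun k => by
      rw [(hrun k).2.1]; exact clamp_mem _
    obtain ⟨K, -, hK⟩ := reach_top a (fun k => η * dVr2 R (bbar (k+1))) 0 (η*m)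
      (mul_pos hη hm) ha0 (fun k _ => (hstep2 k).1)
      (fun k _ => mul_le_mul_of_nonneg_left (hmle _ (hbbar_mem k)) hη.le)
    have ha1 : ∀ k, K ≤ k → a k = 1 := by
      intro k hk
      induction k, hk using Nat.le_induction with
      | base => exact hK
      | succ k hk ih =>
        rw [(hstep2 k).1, ih]
        refine clamp_of_one_le ?_
        have := mul_le_mul_of_nonneg_left (hmle _ (hbbar_mem k)) hη.le
        nlinarith [mul_pos hη hm]
    have habar1 : ∀ k, K ≤ k → abar (k+1) = 1 := by
      intro k hk
      rw [(hrun k).1, ha1 k hk]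
      exact clamp_of_one_le (by nlinarith [mul_pos (hγ k) (hpos _ (hmem k).2)])
    rcases lt_trichotomy (dVc2 C 1) 0 with hc | hc | hc
    · obtain ⟨K', hK', hb0'⟩ := reach_bot b (fun k => η * dVc2 C (abar (k+1))) K
        (η * (-dVc2 C 1)) (mul_pos hη (by linarith)) (hmem K).2
        (fun k hk => (hstep2 k).2)
        (fun k hk => by
          show η * dVc2 C (abar (k+1)) ≤ -(η * -dVc2 C 1)
          rw [habar1 k hk]; ring_nf; exact le_refl _)
      apply hT' K'
      constructor
      · rw [(hrun K').1, ha1 K' hK']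
        exact clamp_of_one_le (by nlinarith [mul_pos (hγ K') (hpos _ (hmem K').2)])
      · rw [(hrun K').2.1, ha1 K' hK', hb0']
        refine clamp_of_nonpos ?_
        have := mul_neg_of_pos_of_neg (hγ K') hc
        linarith
    · apply hT' K
      constructor
      · rw [(hrun K).1, ha1 K le_rfl]
        exact clamp_of_one_le (by nlinarith [mul_pos (hγ K) (hpos _ (hmem K).2)])
      · rw [(hrun K).2.1, ha1 K le_rfl, hc, mul_zero, add_zero]
        exact clamp_of_mem (hmem K).2
    · obtain ⟨K', hK', hb1'⟩ := reach_top b (fun k => η * dVc2 C (abar (k+1))) K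
        (η * dVc2 C 1) (mul_pos hη hc) (hmem K).2
        (fun k hk => (hstep2 k).2)
        (fun k hk => by
          show η * dVc2 C 1 ≤ η * dVc2 C (abar (k+1))
          rw [habar1 k hk])
      apply hT' K'
      constructor
      · rw [(hrun K').1, ha1 K' hK']
        exact clamp_of_one_le (by nlinarith [mul_pos (hγ K') (hpos _ (hmem K').2)])
      · rw [(hrun K').2.1, ha1 K' hK', hb1']
        exact clamp_of_one_le (by nlinarith [mul_pos (hγ K') hc])

end AuxMain

lemma run_flip (R C : Matrix (Fin 2) (Fin 2) ℝ) (η : ℝ) (γ a b abar bbar : ℕ → ℝ)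
    (h : GASPP2Run R C η γ a b abar bbar) :
    GASPP2Run !![R 1 1, R 1 0; R 0 1, R 0 0] !![C 1 1, C 1 0; C 0 1, C 0 0] η γ
      (fun k => 1 - a k) (fun k => 1 - b k) (fun k => 1 - abar k) (fun k => 1 - bbar k) := by
  intro k
  obtain ⟨h1, h2, h3, h4⟩ := h k
  have e1 : ∀ x y t : ℝ, (1:ℝ) - clamp (x + t * dVr2 R y)
      = clamp ((1 - x) + t * dVr2 !![R 1 1, R 1 0; R 0 1, R 0 0] (1 - y)) := by
    intro x y t
    rw [one_sub_clamp]
    congr 1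
    rw [dVr2_flipM, sub_sub_cancel]
    ring
  have e2 : ∀ x y t : ℝ, (1:ℝ) - clamp (x + t * dVc2 C y)
      = clamp ((1 - x) + t * dVc2 !![C 1 1, C 1 0; C 0 1, C 0 0] (1 - y)) := by
    intro x y t
    rw [one_sub_clamp]
    congr 1
    rw [dVc2_flipM, sub_sub_cancel]
    ring
  refine ⟨?_, ?_, ?_, ?_⟩
  · show (1:ℝ) - abar (k+1) = clamp ((1 - a k) + γ k * dVr2 _ (1 - b k))
    rw [h1]; exact e1 _ _ _
  · show (1:ℝ) - bbar (k+1) = clamp ((1 - b k) + γ k * dVc2 _ (1 - a k))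
    rw [h2]; exact e2 _ _ _
  · rintro ⟨p, q⟩
    have p' : abar (k+1) = a k := by
      have : (1:ℝ) - abar (k+1) = 1 - a k := p
      linarith
    have q' : bbar (k+1) = b k := by
      have : (1:ℝ) - bbar (k+1) = 1 - b k := q
      linarith
    obtain ⟨r1, r2, r3⟩ := h3 ⟨p', q'⟩
    exact ⟨by show (1:ℝ) - a (k+1) = 1 - a k; rw [r1],
      by show (1:ℝ) - b (k+1) = 1 - b k; rw [r2], r3⟩
  · intro hn
    have hn' : ¬(abar (k+1) = a k ∧ bbar (k+1) = b k) := by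
      rintro ⟨p, q⟩
      exact hn ⟨by show (1:ℝ) - abar (k+1) = 1 - a k; rw [p],
        by show (1:ℝ) - bbar (k+1) = 1 - b k; rw [q]⟩
    obtain ⟨r1, r2, r3, r4⟩ := h4 hn'
    refine ⟨?_, ?_, ?_, ?_⟩
    · show (1:ℝ) - a (k+1) = clamp ((1 - a k) + η * dVr2 _ (1 - bbar (k+1)))
      rw [r1]; exact e1 _ _ _
    · show (1:ℝ) - b (k+1) = clamp ((1 - b k) + η * dVc2 _ (1 - abar (k+1)))
      rw [r2]; exact e2 _ _ _
    · rintro ⟨p, q⟩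
      refine r3 ⟨?_, ?_⟩
      · have : (1:ℝ) - a (k+1) = 1 - a k := p
        linarith
      · have : (1:ℝ) - b (k+1) = 1 - b k := q
        linarith
    · intro hn2
      refine r4 ?_
      rintro ⟨p, q⟩
      exact hn2 ⟨by show (1:ℝ) - a (k+1) = 1 - a k; rw [p],
        by show (1:ℝ) - b (k+1) = 1 - b k; rw [q]⟩

lemma run_trans (R C : Matrix (Fin 2) (Fin 2) ℝ) (η : ℝ) (γ a b abar bbar : ℕ → ℝ)
    (h : GASPP2Run R C η γ a b abar bbar) :
    GASPP2Run !![C 0 0, C 1 0; C 0 1, C 1 1] !![R 0 0, R 1 0; R 0 1, R 1 1] η γ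
      b a bbar abar := by
  intro k
  obtain ⟨h1, h2, h3, h4⟩ := h k
  refine ⟨by rw [dVr2_transM]; exact h2, by rw [dVc2_transM]; exact h1, ?_, ?_⟩
  · rintro ⟨p, q⟩
    obtain ⟨r1, r2, r3⟩ := h3 ⟨q, p⟩
    exact ⟨r2, r1, r3⟩
  · intro hn
    have hn' : ¬(abar (k+1) = a k ∧ bbar (k+1) = b k) := fun ⟨p, q⟩ => hn ⟨q, p⟩
    obtain ⟨r1, r2, r3, r4⟩ := h4 hn'
    exact ⟨by rw [dVr2_transM]; exact r2, by rw [dVc2_transM]; exact r1,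
      fun ⟨p, q⟩ => r3 ⟨q, p⟩, fun hn2 => r4 (fun ⟨p, q⟩ => hn2 ⟨q, p⟩)⟩

lemma nash_flip (R C : Matrix (Fin 2) (Fin 2) ℝ) (α β : ℝ)
    (h : IsNash2 !![R 1 1, R 1 0; R 0 1, R 0 0] !![C 1 1, C 1 0; C 0 1, C 0 0] α β) :
    IsNash2 R C (1 - α) (1 - β) := by
  obtain ⟨hα, hβ, hr, hc⟩ := h
  refine ⟨⟨by linarith [hα.2], by linarith [hα.1]⟩,
    ⟨by linarith [hβ.2], by linarith [hβ.1]⟩, ?_, ?_⟩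
  · intro α' hα'
    have h2 := hr (1 - α') ⟨by linarith [hα'.2], by linarith [hα'.1]⟩
    rw [Vr2_flipM, Vr2_flipM, sub_sub_cancel] at h2
    exact h2
  · intro β' hβ'
    have h2 := hc (1 - β') ⟨by linarith [hβ'.2], by linarith [hβ'.1]⟩
    rw [Vc2_flipM, Vc2_flipM, sub_sub_cancel] at h2
    exact h2

lemma nash_trans (R C : Matrix (Fin 2) (Fin 2) ℝ) (α β : ℝ)
    (h : IsNash2 !![C 0 0, C 1 0; C 0 1, C 1 1] !![R 0 0, R 1 0; R 0 1, R 1 1] β α) :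
    IsNash2 R C α β := by
  obtain ⟨hβ, hα, hr, hc⟩ := h
  refine ⟨hα, hβ, ?_, ?_⟩
  · intro α' hα'
    have h2 := hc α' hα'
    rw [Vc2_transM, Vc2_transM] at h2
    exact h2
  · intro β' hβ'
    have h2 := hr β' hβ'
    rw [Vr2_transM, Vr2_transM] at h2
    exact h2

lemma core' (R C : Matrix (Fin 2) (Fin 2) ℝ) (η : ℝ) (γ a b abar bbar : ℕ → ℝ)
    (hη : 0 < η) (hγ0 : 0 < γ 0)
    (ha0 : a 0 ∈ Set.Icc (0:ℝ) 1) (hb0 : b 0 ∈ Set.Icc (0:ℝ) 1)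
    (hrun : GASPP2Run R C η γ a b abar bbar)
    (hsign : (∀ β ∈ Set.Icc (0:ℝ) 1, 0 < dVr2 R β) ∨
      (∀ β ∈ Set.Icc (0:ℝ) 1, dVr2 R β < 0)) :
    ∃ αs βs : ℝ, IsNash2 R C αs βs ∧
      Filter.Tendsto (fun k => (a k, b k)) Filter.atTop (nhds (αs, βs)) := by
  rcases hsign with hpos | hneg
  · exact core R C η γ a b abar bbar hη hγ0 ha0 hb0 hrun hpos
  · obtain ⟨αs', βs', hN, hTend⟩ := core !![R 1 1, R 1 0; R 0 1, R 0 0]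
      !![C 1 1, C 1 0; C 0 1, C 0 0] η γ
      (fun k => 1 - a k) (fun k => 1 - b k) (fun k => 1 - abar k) (fun k => 1 - bbar k)
      hη hγ0 ⟨by simp; linarith [ha0.2], by simp; linarith [ha0.1]⟩
      ⟨by simp; linarith [hb0.2], by simp; linarith [hb0.1]⟩
      (run_flip R C η γ a b abar bbar hrun)
      (by
        intro β hβ
        rw [dVr2_flipM]
        have := hneg (1 - β) ⟨by linarith [hβ.2], by linarith [hβ.1]⟩
        linarith)
    refine ⟨1 - αs', 1 - βs', nash_flip R C αs' βs' hN, ?_⟩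
    have h1 : Filter.Tendsto (fun k => 1 - a k) Filter.atTop (nhds αs') :=
      (continuous_fst.tendsto _).comp hTend
    have h2 : Filter.Tendsto (fun k => 1 - b k) Filter.atTop (nhds βs') :=
      (continuous_snd.tendsto _).comp hTend
    have h3 : Filter.Tendsto a Filter.atTop (nhds (1 - αs')) := by
      have := h1.const_sub 1
      simpa using this
    have h4 : Filter.Tendsto b Filter.atTop (nhds (1 - βs')) := by
      have := h2.const_sub 1
      simpa using this
    exact h3.prodMk_nhds h4

lemma sign_const {u bb : ℝ} (hu : u ≠ 0) (h : -bb / u ∉ Set.Icc (0:ℝ) 1) :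
    (∀ x ∈ Set.Icc (0:ℝ) 1, 0 < u * x + bb) ∨ (∀ x ∈ Set.Icc (0:ℝ) 1, u * x + bb < 0) := by
  have key : -bb / u * u = -bb := div_mul_cancel₀ _ hu
  simp only [Set.mem_Icc, not_and_or, not_le] at h
  rcases hu.lt_or_gt with hneg | hpos
  · rcases h with h | h
    · right
      intro x hx
      have h2 : (0:ℝ) < -bb / u * u := mul_pos_of_neg_of_neg h hneg
      rw [key] at h2
      nlinarith [hx.1, hx.2]
    · left
      intro x hx
      have h2 : -bb / u * u < 1 * u := mul_lt_mul_of_neg_right h hneg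
      rw [key, one_mul] at h2
      nlinarith [hx.1, hx.2]
  · rcases h with h | h
    · left
      intro x hx
      have h2 : -bb / u * u < 0 * u := mul_lt_mul_of_pos_right h hpos
      rw [key, zero_mul] at h2
      nlinarith [hx.1, hx.2]
    · right
      intro x hx
      have h2 : 1 * u < -bb / u * u := mul_lt_mul_of_pos_right h hpos
      rw [key, one_mul] at h2
      nlinarith [hx.1, hx.2]


/-- Property 2: in a 2×2 game with u_r u_c > 0 in which exactly
one of the center coordinates α^c = −b_c/u_c, β^c = −b_r/u_r lies in [0,1],
if both agents follow GA-SPP (Conditions 1–3), then from any initial strategy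
pair the strategies converge to a Nash equilibrium. -/
theorem stmt12 (R C : Matrix (Fin 2) (Fin 2) ℝ)
    (hU : 0 < ur2 R * uc2 C)
    (hcenter : Xor' (-bc2 C / uc2 C ∈ Set.Icc (0 : ℝ) 1)
      (-br2 R / ur2 R ∈ Set.Icc (0 : ℝ) 1))
    (γ₀ η : ℝ) (hcond : Conds2 R C γ₀ η)
    (γ a b abar bbar : ℕ → ℝ)
    (hγ₀ : γ 0 = γ₀) (ha₀ : a 0 ∈ Set.Icc (0 : ℝ) 1) (hb₀ : b 0 ∈ Set.Icc (0 : ℝ) 1)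
    (hrun : GASPP2Run R C η γ a b abar bbar) :
    ∃ αs βs : ℝ, IsNash2 R C αs βs ∧
      Filter.Tendsto (fun k => (a k, b k)) Filter.atTop (nhds (αs, βs)) := by
  obtain ⟨hγpos, hηpos, -, -, -⟩ := hcond
  have hur : ur2 R ≠ 0 := left_ne_zero_of_mul (ne_of_gt hU)
  have huc : uc2 C ≠ 0 := right_ne_zero_of_mul (ne_of_gt hU)
  have hγ0' : 0 < γ 0 := by rw [hγ₀]; exact hγpos
  rcases hcenter with ⟨hin, hnot⟩ | ⟨hin, hnot⟩
  · have hs := sign_const hur hnot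
    have hs' : (∀ β ∈ Set.Icc (0:ℝ) 1, 0 < dVr2 R β) ∨
        (∀ β ∈ Set.Icc (0:ℝ) 1, dVr2 R β < 0) := hs
    exact core' R C η γ a b abar bbar hηpos hγ0' ha₀ hb₀ hrun hs'
  · have hs := sign_const huc hnot
    obtain ⟨βs, αs, hN, hTend⟩ := core' !![C 0 0, C 1 0; C 0 1, C 1 1]
      !![R 0 0, R 1 0; R 0 1, R 1 1] η γ b a bbar abar hηpos hγ0' hb₀ ha₀
      (run_trans R C η γ a b abar bbar hrun)
      (by
        rcases hs with h | h
        · left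
          intro β hβ
          rw [dVr2_transM]
          exact h β hβ
        · right
          intro β hβ
          rw [dVr2_transM]
          exact h β hβ)
    refine ⟨αs, βs, nash_trans R C αs βs hN, ?_⟩
    have h1 : Filter.Tendsto b Filter.atTop (nhds βs) :=
      (continuous_fst.tendsto _).comp hTend
    have h2 : Filter.Tendsto a Filter.atTop (nhds αs) :=
      (continuous_snd.tendsto _).comp hTend
    exact h2.prodMk_nhds h1
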